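/- arXiv:1407.4105 — 2 statements merged into one kernel-verified Lean document; each statement's English description precedes it below -/
import Mathlib

section
/- The complete elliptic integral of the first kind at parameter m = 1/2 satisfies K[1/2] = ∫₀¹ dτ / (√(1−τ²) · √(1 − τ²/2)) = Γ(1/4)² / (4√π). -/
/-!
The substitution `τ = √(1 - √x)` turns `K[1/2]` into `(√2 / 4) · B(1/4, 1/2)
= (√2 / 4) · Γ(1/4) √π / Γ(3/4)`, and the reflection formula
`Γ(1/4) Γ(3/4) = π / sin (π / 4) = √2 π` eliminates `Γ(3/4)`.
-/

open MeasureTheory Set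

namespace Real

lemma sqrt_lt_one {x : ℝ} : √x < 1 ↔ x < 1 := by simp [← not_le]

theorem integral_rpow_mul_one_sub_rpow {a b : ℝ} (ha : 0 < a) (hb : 0 < b) :
    ∫ x in (0:ℝ)..1, x ^ (a - 1) * (1 - x) ^ (b - 1) = Gamma a * Gamma b / Gamma (a + b) := by
  have h := Complex.betaIntegral_eq_Gamma_mul_div a b (by simpa) (by simpa)
  rw [Complex.betaIntegral, ← Complex.ofReal_add, Complex.Gamma_ofReal, Complex.Gamma_ofReal,
    Complex.Gamma_ofReal] at h
  rw [← Complex.ofReal_inj, ← intervalIntegral.integral_ofReal,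
    Complex.ofReal_div, Complex.ofReal_mul, ← h]
  refine intervalIntegral.integral_congr fun x hx => ?_
  rw [uIcc_of_le zero_le_one] at hx
  push_cast
  rw [Complex.ofReal_cpow hx.1, Complex.ofReal_cpow (by linarith [hx.2])]
  push_cast
  ring_nf

theorem Gamma_one_quarter_mul_Gamma_three_quarters :
    Gamma (1 / 4) * Gamma (3 / 4) = √2 * π := by
  have h := Gamma_mul_Gamma_one_sub (1 / 4)
  rw [show π * (1 / 4) = π / 4 by ring, sin_pi_div_four] at h
  norm_num at h
  rw [h]
  field_simp
  norm_num

end Real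

open Real

section SqrtOneSubSqrt

variable {x : ℝ}

lemma hasDerivAt_sqrt_one_sub_sqrt (hx0 : 0 < x) (hx1 : x < 1) :
    HasDerivAt (fun y => √(1 - √y)) (-1 / (4 * √x * √(1 - √x))) x := by
  have hsx : √x < 1 := sqrt_lt_one.2 hx1
  have h := (hasDerivAt_sqrt (by linarith : 1 - √x ≠ 0)).comp x
    ((hasDerivAt_sqrt hx0.ne').const_sub 1)
  refine h.congr_deriv ?_
  have : 0 < √(1 - √x) := sqrt_pos.mpr (by linarith)
  field_simp
  ring

lemma sqrt_one_sub_sqrt_image_Ioo : (fun y => √(1 - √y)) '' Ioo 0 1 = Ioo 0 1 := by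
  ext τ
  constructor
  · rintro ⟨x, ⟨hx0, hx1⟩, rfl⟩
    have hsx : 0 < √x := sqrt_pos.mpr hx0
    exact ⟨sqrt_pos.mpr (by linarith [sqrt_lt_one.2 hx1]), sqrt_lt_one.2 (by linarith)⟩
  · rintro ⟨hτ0, hτ1⟩
    have h1 : 0 < 1 - τ ^ 2 := by nlinarith
    refine ⟨(1 - τ ^ 2) ^ 2, ⟨by positivity, by nlinarith⟩, ?_⟩
    simp only
    rw [sqrt_sq h1.le, sub_sub_cancel, sqrt_sq hτ0.le]

lemma injOn_sqrt_one_sub_sqrt : InjOn (fun y => √(1 - √y)) (Ioo 0 1) := by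
  intro x hx y hy h
  have h' : 1 - √x = 1 - √y :=
    (sqrt_inj (by linarith [sqrt_lt_one.2 hx.2]) (by linarith [sqrt_lt_one.2 hy.2])).mp h
  exact (sqrt_inj hx.1.le hy.1.le).mp (by linarith)

lemma abs_deriv_mul_integrand_sqrt_one_sub_sqrt (hx0 : 0 < x) (hx1 : x < 1) :
    |-1 / (4 * √x * √(1 - √x))| *
        (1 / (√(1 - √(1 - √x) ^ 2) * √(1 - √(1 - √x) ^ 2 / 2))) =
      √2 / 4 * (x ^ ((1:ℝ) / 4 - 1) * (1 - x) ^ ((1:ℝ) / 2 - 1)) := by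
  set s := √x
  have hs0 : 0 < s := sqrt_pos.mpr hx0
  have hs1 : s < 1 := sqrt_lt_one.2 hx1
  have hx : x = s ^ 2 := (sq_sqrt hx0.le).symm
  have hquarter : x ^ ((1:ℝ) / 4 - 1) = 1 / (s * √s) := by
    rw [show (1:ℝ) / 4 - 1 = -(1 / 2 + 1 / 2 * (1 / 2)) by norm_num, rpow_neg hx0.le,
      rpow_add hx0, rpow_mul hx0.le, ← sqrt_eq_rpow, ← sqrt_eq_rpow, one_div]
  have hhalf : (1 - x) ^ ((1:ℝ) / 2 - 1) = 1 / (√(1 - s) * √(1 + s)) := by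
    rw [show (1:ℝ) / 2 - 1 = -(1 / 2) by norm_num, rpow_neg (by linarith), ← sqrt_eq_rpow,
      ← sqrt_mul (by linarith), one_div, hx]
    ring_nf
  rw [sq_sqrt (by linarith), sub_sub_cancel, show 1 - (1 - s) / 2 = (1 + s) / 2 by ring,
    sqrt_div (by linarith), hquarter, hhalf, abs_div, abs_neg, abs_one,
    abs_of_pos (by positivity : 0 < 4 * s * √(1 - s))]
  have : 0 < √(1 - s) := sqrt_pos.mpr (by linarith)
  have : 0 < √(1 + s) := sqrt_pos.mpr (by linarith)
  field_simp

end SqrtOneSubSqrt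

theorem integral_ellipticK_half_eq_betaIntegral :
    ∫ τ in (0:ℝ)..1, 1 / (√(1 - τ ^ 2) * √(1 - τ ^ 2 / 2)) =
      √2 / 4 * ∫ x in (0:ℝ)..1, x ^ ((1:ℝ) / 4 - 1) * (1 - x) ^ ((1:ℝ) / 2 - 1) := by
  simp only [intervalIntegral.integral_of_le zero_le_one, integral_Ioc_eq_integral_Ioo,
    ← integral_const_mul]
  conv_lhs => rw [← sqrt_one_sub_sqrt_image_Ioo]
  rw [integral_image_eq_integral_abs_deriv_smul measurableSet_Ioo
    (fun x hx => (hasDerivAt_sqrt_one_sub_sqrt hx.1 hx.2).hasDerivWithinAt)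
    injOn_sqrt_one_sub_sqrt]
  exact setIntegral_congr_fun measurableSet_Ioo fun x hx => (smul_eq_mul ..).trans <|
    abs_deriv_mul_integrand_sqrt_one_sub_sqrt hx.1 hx.2

/-- The complete elliptic integral of the first kind with parameter `m = 1/2`:
`K[1/2] = ∫₀¹ dτ/(√(1−τ²)·√(1−τ²/2)) = Γ(1/4)²/(4√π)`. -/
theorem ellipticK_half :
    ∫ τ in (0:ℝ)..1, 1 / (Real.sqrt (1 - τ ^ 2) * Real.sqrt (1 - τ ^ 2 / 2)) =
      Real.Gamma (1 / 4) ^ 2 / (4 * Real.sqrt Real.pi) := by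
  have hΓ : Gamma (3 / 4) = √2 * π / Gamma (1 / 4) := by
    rw [← Gamma_one_quarter_mul_Gamma_three_quarters]
    field_simp [(Gamma_pos_of_pos (by norm_num : (0:ℝ) < 1 / 4)).ne']
  rw [integral_ellipticK_half_eq_betaIntegral,
    integral_rpow_mul_one_sub_rpow (by norm_num) (by norm_num), Gamma_one_half_eq,
    show (1:ℝ) / 4 + 1 / 2 = 3 / 4 by norm_num, hΓ]
  have : 0 < √π := sqrt_pos.mpr pi_pos
  field_simp
  rw [sq_sqrt pi_pos.le]
end

section
/- For every real x with −1 < x < 1, one has ∫₀^x (1 − s²)^{−3/4} ds = (Γ(1/4) / (2√2·π)) · ∑_{n=0}^∞ [Γ(n + 1/2)·Γ(n + 3/4) / Γ(n + 3/2)] · x^{2n+1} / n!. (Equivalently, (1/2)∫₀^x (1−s²)^{−3/4} ds = (x/2)·₂F₁(1/2, 3/4; 3/2; x²), where the hypergeometric function is given by the stated series.) -/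
open MeasureTheory Set Real

set_option maxHeartbeats 1000000

/-- Ratio-test summability for the binomial/Gamma series. -/
lemma sc_ratio_summable {a t : ℝ} (ha : 0 < a) (ht0 : 0 ≤ t) (ht1 : t < 1) :
    Summable (fun n : ℕ => Real.Gamma (n + a) * t ^ n / n.factorial) := by
  apply summable_of_ratio_norm_eventually_le (r := (1 + t) / 2) (by linarith)
  refine Filter.eventually_atTop.2 ⟨⌈2 * a / (1 - t)⌉₊, fun n hn => ?_⟩
  have h1t : (0 : ℝ) < 1 - t := by linarith
  have hn' : 2 * a / (1 - t) ≤ (n : ℝ) := le_trans (Nat.le_ceil _) (by exact_mod_cast hn)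
  rw [div_le_iff₀ h1t] at hn'
  have hat : a * t ≤ a := by nlinarith
  have hfac : ((n + 1).factorial : ℝ) = ((n : ℝ) + 1) * n.factorial := by
    push_cast [Nat.factorial_succ]; ring
  have hgam : Real.Gamma (((n : ℕ) + 1 : ℕ) + a) = ((n : ℝ) + a) * Real.Gamma (n + a) := by
    push_cast
    rw [show (n : ℝ) + 1 + a = ((n : ℝ) + a) + 1 by ring,
      Real.Gamma_add_one (by positivity)]
  have hpos : (0 : ℝ) < Real.Gamma (n + a) := Real.Gamma_pos_of_pos (by positivity)
  have key : ((n : ℝ) + a) * t ≤ (1 + t) / 2 * ((n : ℝ) + 1) := by nlinarith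
  have hf1 : ((n : ℝ) + 1) ≠ 0 := by positivity
  have hf2 : ((n.factorial : ℝ)) ≠ 0 := by positivity
  rw [Real.norm_eq_abs, Real.norm_eq_abs,
    abs_of_nonneg (by positivity), abs_of_nonneg (by positivity), hgam, hfac,
    show ((n : ℝ) + a) * Real.Gamma (n + a) * t ^ (n + 1) / (((n : ℝ) + 1) * n.factorial)
      = (((n : ℝ) + a) * t / ((n : ℝ) + 1)) * (Real.Gamma (n + a) * t ^ n / n.factorial) from by
        field_simp; ring]
  apply mul_le_mul_of_nonneg_right _ (by positivity)
  rw [div_le_iff₀ (by positivity)]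
  exact key

/-- Binomial series via the Gamma-integral representation. -/
lemma sc_binom {a t : ℝ} (ha : 0 < a) (ht0 : 0 ≤ t) (ht1 : t < 1) :
    ∑' n : ℕ, Real.Gamma (n + a) * t ^ n / n.factorial
      = (1 - t) ^ (-a) * Real.Gamma a := by
  set F : ℕ → ℝ → ℝ := fun n u =>
    t ^ n / n.factorial * (Real.exp (-u) * u ^ ((n : ℝ) + a - 1)) with hF
  have hint : ∀ n : ℕ, IntegrableOn (F n) (Ioi 0) := by
    intro n
    exact (Real.GammaIntegral_convergent (by positivity : (0:ℝ) < (n : ℝ) + a)).const_mul _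
  have hval : ∀ n : ℕ, ∫ u in Ioi 0, F n u = Real.Gamma ((n : ℝ) + a) * t ^ n / n.factorial := by
    intro n
    rw [hF]
    simp only
    rw [integral_const_mul, ← Real.Gamma_eq_integral (by positivity)]
    ring
  have hnorm : ∀ n : ℕ, ∫ u in Ioi 0, ‖F n u‖
      = Real.Gamma ((n : ℝ) + a) * t ^ n / n.factorial := by
    intro n
    rw [← hval n]
    apply setIntegral_congr_fun measurableSet_Ioi
    intro u hu
    show ‖F n u‖ = F n u
    rw [Real.norm_eq_abs, abs_of_nonneg]
    exact mul_nonneg (div_nonneg (pow_nonneg ht0 n) (Nat.cast_nonneg _))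
      (mul_nonneg (Real.exp_nonneg _) (Real.rpow_nonneg (le_of_lt hu) _))
  have hsum : Summable fun n : ℕ => ∫ u in Ioi 0, ‖F n u‖ := by
    simp only [hnorm]
    exact sc_ratio_summable ha ht0 ht1
  have swap := MeasureTheory.integral_tsum_of_summable_integral_norm hint hsum
  calc ∑' n : ℕ, Real.Gamma (n + a) * t ^ n / n.factorial
      = ∑' n : ℕ, ∫ u in Ioi 0, F n u := tsum_congr fun n => (hval n).symm
    _ = ∫ u in Ioi 0, ∑' n : ℕ, F n u := swap
    _ = ∫ u in Ioi 0, u ^ (a - 1) * Real.exp (-((1 - t) * u)) := by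
        apply setIntegral_congr_fun measurableSet_Ioi
        intro u hu
        show ∑' n : ℕ, F n u = u ^ (a - 1) * Real.exp (-((1 - t) * u))
        have hu0 : 0 < u := hu
        have h1 : ∀ n : ℕ, F n u
            = (Real.exp (-u) * u ^ (a - 1)) * ((t * u) ^ n / n.factorial) := by
          intro n
          rw [hF]
          simp only
          rw [show (n : ℝ) + a - 1 = (n : ℝ) + (a - 1) by ring, Real.rpow_add hu0,
            Real.rpow_natCast, mul_pow]
          ring
        rw [tsum_congr h1, tsum_mul_left]
        have hexp : ∑' n : ℕ, (t * u) ^ n / n.factorial = Real.exp (t * u) := by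
          rw [Real.exp_eq_exp_ℝ, NormedSpace.exp_eq_tsum_div]
        rw [hexp]
        rw [show Real.exp (-u) * u ^ (a-1) * Real.exp (t*u)
            = u ^ (a-1) * (Real.exp (-u) * Real.exp (t*u)) by ring, ← Real.exp_add]
        congr 2
        ring
    _ = (1 / (1 - t)) ^ a * Real.Gamma a :=
        Real.integral_rpow_mul_exp_neg_mul_Ioi ha (by linarith)
    _ = (1 - t) ^ (-a) * Real.Gamma a := by
        rw [one_div, Real.inv_rpow (by linarith), ← Real.rpow_neg (by linarith)]

lemma sc_coeff_refl : Real.Gamma (1/4 : ℝ) * Real.Gamma (3/4 : ℝ) = Real.sqrt 2 * Real.pi := by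
  have h := Real.Gamma_mul_Gamma_one_sub (1/4 : ℝ)
  rw [show (1 : ℝ) - 1/4 = 3/4 by norm_num, show Real.pi * (1/4) = Real.pi/4 by ring,
    Real.sin_pi_div_four] at h
  have h2 : Real.sqrt 2 ^ 2 = 2 := Real.sq_sqrt (by norm_num)
  have h2' : (Real.sqrt 2 / 2 : ℝ) ≠ 0 := by positivity
  rw [h, div_eq_iff h2']
  linear_combination (-Real.pi / 2) * h2

lemma sc_main_nonneg (x : ℝ) (hx0 : 0 ≤ x) (hx₂ : x < 1) :
    ∫ s in (0:ℝ)..x, (1 - s ^ 2) ^ (-(3 : ℝ) / 4) =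
      Real.Gamma (1 / 4) / (2 * Real.sqrt 2 * Real.pi) *
        ∑' n : ℕ,
          Real.Gamma (n + 1 / 2) * Real.Gamma (n + 3 / 4) / Real.Gamma (n + 3 / 2) *
            x ^ (2 * n + 1) / (Nat.factorial n : ℝ) := by
  have hx2 : x ^ 2 < 1 := by nlinarith
  have hg34 : (0 : ℝ) < Real.Gamma (3/4) := Real.Gamma_pos_of_pos (by norm_num)
  set c : ℕ → ℝ := fun n => Real.Gamma (n + 3/4) / (Real.Gamma (3/4) * n.factorial) with hc
  have hcpos : ∀ n : ℕ, 0 ≤ c n := by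
    intro n
    have := Real.Gamma_pos_of_pos (show (0:ℝ) < (n:ℝ) + 3/4 by positivity)
    positivity
  -- pointwise series expansion of the integrand
  have hpt : ∀ s : ℝ, 0 ≤ s → s < 1 →
      (1 - s ^ 2) ^ (-(3 : ℝ) / 4) = ∑' n : ℕ, c n * s ^ (2 * n) := by
    intro s hs0 hs1
    have hs2 : s ^ 2 < 1 := by nlinarith
    have hb := sc_binom (show (0:ℝ) < 3/4 by norm_num) (sq_nonneg s) hs2
    have : (1 - s ^ 2) ^ (-(3:ℝ)/4)
        = (∑' n : ℕ, Real.Gamma (n + 3/4) * (s ^ 2) ^ n / n.factorial) / Real.Gamma (3/4) := by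
      rw [hb, show -(3:ℝ)/4 = -(3/4) by norm_num]
      field_simp
    rw [this, ← tsum_div_const]
    apply tsum_congr
    intro n
    rw [hc]
    simp only
    rw [← pow_mul]
    ring
  -- integrability and values
  have hGint : ∀ n : ℕ, IntegrableOn (fun s => c n * s ^ (2 * n)) (Ioc 0 x) := by
    intro n
    exact (Continuous.integrableOn_Ioc (by continuity))
  have hGval : ∀ n : ℕ, ∫ s in Ioc 0 x, c n * s ^ (2 * n)
      = c n * (x ^ (2 * n + 1) / (2 * (n : ℝ) + 1)) := by
    intro n
    rw [← intervalIntegral.integral_of_le hx0, intervalIntegral.integral_const_mul,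
      integral_pow]
    have : ((0:ℝ)) ^ (2 * n + 1) = 0 := zero_pow (by omega)
    rw [this]
    push_cast
    ring
  have hGnorm : ∀ n : ℕ, ∫ s in Ioc 0 x, ‖c n * s ^ (2 * n)‖
      = c n * (x ^ (2 * n + 1) / (2 * (n : ℝ) + 1)) := by
    intro n
    rw [← hGval n]
    apply setIntegral_congr_fun measurableSet_Ioc
    intro s _
    have hs : 0 ≤ s ^ (2 * n) := Even.pow_nonneg (even_two_mul n) s
    show ‖c n * s ^ (2 * n)‖ = c n * s ^ (2 * n)
    rw [Real.norm_eq_abs, abs_of_nonneg (mul_nonneg (hcpos n) hs)]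
  have hsum : Summable fun n : ℕ => ∫ s in Ioc 0 x, ‖c n * s ^ (2 * n)‖ := by
    simp only [hGnorm]
    apply Summable.of_nonneg_of_le
      (f := fun n : ℕ => x / Real.Gamma (3/4) * (Real.Gamma (n + 3/4) * (x ^ 2) ^ n / n.factorial))
    · intro n
      have : (0:ℝ) ≤ x ^ (2 * n + 1) := pow_nonneg hx0 _
      have h21 : (0:ℝ) < 2 * (n:ℝ) + 1 := by positivity
      positivity
    · intro n
      have h1 : x ^ (2 * n + 1) / (2 * (n : ℝ) + 1) ≤ x ^ (2 * n + 1) :=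
        div_le_self (pow_nonneg hx0 _)
          (by have := Nat.cast_nonneg (α := ℝ) n; linarith)
      calc c n * (x ^ (2 * n + 1) / (2 * (n : ℝ) + 1)) ≤ c n * x ^ (2 * n + 1) :=
            mul_le_mul_of_nonneg_left h1 (hcpos n)
        _ = x / Real.Gamma (3/4) * (Real.Gamma (n + 3/4) * (x ^ 2) ^ n / n.factorial) := by
            rw [hc]
            simp only
            rw [pow_succ, ← pow_mul]
            ring
    · exact (sc_ratio_summable (by norm_num) (sq_nonneg x) hx2).mul_left _
  have swap := MeasureTheory.integral_tsum_of_summable_integral_norm hGint hsum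
  -- the integral
  have hLHS : ∫ s in (0:ℝ)..x, (1 - s ^ 2) ^ (-(3 : ℝ) / 4)
      = ∑' n : ℕ, c n * (x ^ (2 * n + 1) / (2 * (n : ℝ) + 1)) := by
    rw [intervalIntegral.integral_of_le hx0]
    rw [show (∫ s in Ioc 0 x, (1 - s ^ 2) ^ (-(3 : ℝ) / 4))
        = ∫ s in Ioc 0 x, ∑' n : ℕ, c n * s ^ (2 * n) from
      setIntegral_congr_fun measurableSet_Ioc
        (fun s hs => hpt s (le_of_lt hs.1) (lt_of_le_of_lt hs.2 hx₂))]
    rw [← swap]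
    exact tsum_congr hGval
  rw [hLHS, ← tsum_mul_left]
  apply tsum_congr
  intro n
  -- coefficient identity
  have hg32 : Real.Gamma ((n:ℝ) + 3/2) = ((n:ℝ) + 1/2) * Real.Gamma ((n:ℝ) + 1/2) := by
    rw [show (n:ℝ) + 3/2 = ((n:ℝ) + 1/2) + 1 by ring,
      Real.Gamma_add_one (by positivity)]
  have hg12 : (0:ℝ) < Real.Gamma ((n:ℝ) + 1/2) := Real.Gamma_pos_of_pos (by positivity)
  have hg14 : Real.Gamma (1/4 : ℝ) = Real.sqrt 2 * Real.pi / Real.Gamma (3/4) := by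
    rw [eq_div_iff (ne_of_gt hg34)]
    exact sc_coeff_refl
  have h2' : Real.sqrt 2 ≠ 0 := by positivity
  have hfn : ((n.factorial : ℝ)) ≠ 0 := by positivity
  have hn12 : ((n:ℝ) + 1/2) ≠ 0 := by positivity
  rw [hc]
  simp only
  rw [hg32, hg14]
  field_simp

/-- Series expansion of the Schwarz–Christoffel integral: for `−1 < x < 1`,
`∫₀ˣ (1−s²)^{−3/4} ds
  = (Γ(1/4)/(2√2·π)) ∑_{n=0}^∞ [Γ(n+1/2)Γ(n+3/4)/Γ(n+3/2)] x^{2n+1}/n!`. -/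
theorem sc_integral_series (x : ℝ) (hx₁ : -1 < x) (hx₂ : x < 1) :
    ∫ s in (0:ℝ)..x, (1 - s ^ 2) ^ (-(3 : ℝ) / 4) =
      Real.Gamma (1 / 4) / (2 * Real.sqrt 2 * Real.pi) *
        ∑' n : ℕ,
          Real.Gamma (n + 1 / 2) * Real.Gamma (n + 3 / 4) / Real.Gamma (n + 3 / 2) *
            x ^ (2 * n + 1) / (Nat.factorial n : ℝ) := by
  rcases le_or_gt 0 x with h | h
  · exact sc_main_nonneg x h hx₂
  · have hx' := sc_main_nonneg (-x) (by linarith) (by linarith)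
    have hodd : ∀ n : ℕ, Real.Gamma (n + 1 / 2) * Real.Gamma (n + 3 / 4) / Real.Gamma (n + 3 / 2) *
            (-x) ^ (2 * n + 1) / (Nat.factorial n : ℝ)
        = -(Real.Gamma (n + 1 / 2) * Real.Gamma (n + 3 / 4) / Real.Gamma (n + 3 / 2) *
            x ^ (2 * n + 1) / (Nat.factorial n : ℝ)) := by
      intro n
      rw [Odd.neg_pow ⟨n, by ring⟩]
      ring
    rw [tsum_congr hodd, tsum_neg] at hx'
    have hint : ∫ s in (0:ℝ)..(-x), (1 - s ^ 2) ^ (-(3 : ℝ) / 4)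
        = -∫ s in (0:ℝ)..x, (1 - s ^ 2) ^ (-(3 : ℝ) / 4) := by
      have h1 := intervalIntegral.integral_comp_neg (a := (0:ℝ)) (b := -x)
        (f := fun s => (1 - s ^ 2) ^ (-(3 : ℝ) / 4))
      simp only [neg_sq, neg_neg, neg_zero] at h1
      rw [h1, intervalIntegral.integral_symm]
    rw [hint] at hx'
    linarith
end
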